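/- arXiv:2006.06886 — 2 statements merged into one kernel-verified Lean document; each statement's English description precedes it below -/
import Mathlib

section
/- With the notation of the context (B encoding the crossed product A ⋊_Φ ℤ/2ℤ, φ a pure state of A with φ∘Φ = φ, and ψ a state of B extending φ), for every a ∈ A one has ψ(Φ(a)u) = ψ(au). -/
open scoped ComplexOrder

noncomputable section

variable {A B : Type*}
  [NormedRing A] [StarRing A] [CStarRing A]
  [NormedAlgebra ℂ A] [StarModule ℂ A] [CompleteSpace A]
  [NormedRing B] [StarRing B] [CStarRing B]
  [NormedAlgebra ℂ B] [StarModule ℂ B] [CompleteSpace B]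

/-- A state on a unital C*-algebra: a continuous linear functional `φ` with `φ 1 = 1`
which is positive. -/
def IsState {C : Type*} [NormedRing C] [StarRing C] [CStarRing C]
    [NormedAlgebra ℂ C] [StarModule ℂ C] [CompleteSpace C]
    (φ : C →L[ℂ] ℂ) : Prop :=
  φ 1 = 1 ∧ ∀ a : C, 0 ≤ φ (star a * a)

/-- A pure state: an extreme point of the state space. -/
def IsPureState {C : Type*} [NormedRing C] [StarRing C] [CStarRing C]
    [NormedAlgebra ℂ C] [StarModule ℂ C] [CompleteSpace C]
    (φ : C →L[ℂ] ℂ) : Prop :=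
  IsState φ ∧ ∀ ψ₁ ψ₂ : C →L[ℂ] ℂ, IsState ψ₁ → IsState ψ₂ →
    ∀ t : ℝ, 0 < t → t < 1 →
      φ = (t : ℂ) • ψ₁ + ((1 - t : ℝ) : ℂ) • ψ₂ → ψ₁ = φ ∧ ψ₂ = φ

/-- In the crossed product `B = A ⋊_Φ ℤ/2ℤ` (encoded by `ι, u, E`), for a pure state
`φ` of `A` with `φ ∘ Φ = φ` and a state `ψ` of `B` extending `φ`, one has
`ψ(Φ(a)u) = ψ(au)` for every `a ∈ A`. -/
theorem statement8
    (ι : A →⋆ₐ[ℂ] B) (hι : Isometry (⇑ι))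
    (Φ : A ≃⋆ₐ[ℂ] A) (hΦ2 : ∀ a : A, Φ (Φ a) = a)
    (houter : ∀ v ∈ unitary A, ∃ a : A, Φ a ≠ v * a * star v)
    (u : B) (hu_mem : u ∈ unitary B) (hu_sa : star u = u)
    (hcov : ∀ a : A, u * ι a * u = ι (Φ a))
    (hspan : ∀ b : B, ∃ a c : A, b = ι a + ι c * u)
    (E : B →ₗ[ℂ] A) (hE_unital : E 1 = 1)
    (hE_pos : ∀ b : B, ∃ d : A, E (star b * b) = star d * d)
    (hE_exp : ∀ a c : A, E (ι a + ι c * u) = a)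
    (φ : A →L[ℂ] ℂ) (hφ : IsPureState φ) (hφΦ : ∀ a : A, φ (Φ a) = φ a)
    (ψ : B →L[ℂ] ℂ) (hψ : IsState ψ) (hres : ∀ a : A, ψ (ι a) = φ a) :
    ∀ a : A, ψ (ι (Φ a) * u) = ψ (ι a * u) := by
  intro a
  have hu1 : u * u = (1 : B) := by
    have h := hu_mem.1
    rwa [hu_sa] at h
  have ucomm : ∀ c : A, u * ι c = ι (Φ c) * u := by
    intro c
    have h : u * ι c * (u * u) = ι (Φ c) * u := by
      rw [← mul_assoc, hcov c]
    rwa [hu1, mul_one] at h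
  -- a general expansion identity
  have hexp : ∀ (α β γ δ : ℂ) (c : A),
      (α • (1:B) + β • u) * ι c * (γ • (1:B) + δ • u)
        = (α*γ) • ι c + (α*δ) • (ι c * u) + (β*γ) • (ι (Φ c) * u) + (β*δ) • ι (Φ c) := by
    intro α β γ δ c
    simp only [add_mul, mul_add, smul_mul_assoc, mul_smul_comm, one_mul, mul_one, smul_smul,
      ucomm, mul_assoc, hu1]
    module
  -- the unitary w = (1/2)((1+i)·1 + (1-i)·u)
  set α : ℂ := 2⁻¹ * (1 + Complex.I) with hα
  set β : ℂ := 2⁻¹ * (1 - Complex.I) with hβ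
  set w : B := α • (1 : B) + β • u with hw
  have hsα : star α = β := by
    simp only [hα, hβ, Complex.star_def, map_mul, map_add, map_one, Complex.conj_I,
      map_inv₀, map_ofNat]
    ring
  have hsβ : star β = α := by
    simp only [hα, hβ, Complex.star_def, map_mul, map_sub, map_one, Complex.conj_I,
      map_inv₀, map_ofNat]
    ring
  have hws : star w = β • (1 : B) + α • u := by
    rw [hw, star_add, star_smul, star_smul, star_one, hu_sa, hsα, hsβ]
  -- scalar computations
  have hβα : β * α = 2⁻¹ := by
    rw [hα, hβ]; linear_combination (-(4:ℂ)⁻¹) * Complex.I_sq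
  have hαβ : α * β = 2⁻¹ := by rw [mul_comm]; exact hβα
  have hα2 : α * α = 2⁻¹ * Complex.I := by
    rw [hα]; linear_combination ((4:ℂ)⁻¹) * Complex.I_sq
  have hβ2 : β * β = -(2⁻¹ * Complex.I) := by
    rw [hβ]; linear_combination ((4:ℂ)⁻¹) * Complex.I_sq
  -- key identities
  have hkey1 : ∀ c : A, star w * ι c * w
      = (2⁻¹:ℂ) • ι c + (-(2⁻¹ * Complex.I)) • (ι c * u)
        + (2⁻¹ * Complex.I) • (ι (Φ c) * u) + (2⁻¹:ℂ) • ι (Φ c) := by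
    intro c
    rw [hws, hw, hexp β α α (β) c, hβα, hβ2, hα2, hαβ]
  have hkey2 : ∀ c : A, w * ι c * star w
      = (2⁻¹:ℂ) • ι c + (2⁻¹ * Complex.I) • (ι c * u)
        + (-(2⁻¹ * Complex.I)) • (ι (Φ c) * u) + (2⁻¹:ℂ) • ι (Φ c) := by
    intro c
    rw [hws, hw, hexp α β β α c, hαβ, hα2, hβ2, hβα]
  -- the two competing states on A
  let ιL : A →L[ℂ] B := ⟨ι.toAlgHom.toLinearMap, hι.continuous⟩
  let ψ₁ : A →L[ℂ] ℂ :=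
    ψ.comp ((((ContinuousLinearMap.mul ℂ B).flip w).comp
      (ContinuousLinearMap.mul ℂ B (star w))).comp ιL)
  let ψ₂ : A →L[ℂ] ℂ :=
    ψ.comp ((((ContinuousLinearMap.mul ℂ B).flip (star w)).comp
      (ContinuousLinearMap.mul ℂ B w)).comp ιL)
  have hψ₁app : ∀ c : A, ψ₁ c = ψ (star w * ι c * w) := fun c => rfl
  have hψ₂app : ∀ c : A, ψ₂ c = ψ (w * ι c * star w) := fun c => rfl
  have hψ₁c : ∀ c : A, ψ₁ c
      = φ c + (2⁻¹ * Complex.I) * (ψ (ι (Φ c) * u) - ψ (ι c * u)) := by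
    intro c
    rw [hψ₁app c, hkey1 c]
    simp only [map_add, map_smul, hres, smul_eq_mul, hφΦ]
    ring
  have hψ₂c : ∀ c : A, ψ₂ c
      = φ c - (2⁻¹ * Complex.I) * (ψ (ι (Φ c) * u) - ψ (ι c * u)) := by
    intro c
    rw [hψ₂app c, hkey2 c]
    simp only [map_add, map_smul, hres, smul_eq_mul, hφΦ]
    ring
  -- both are states
  have hstate : ∀ (v : B), star v * v = 1 → IsState (ψ.comp
      ((((ContinuousLinearMap.mul ℂ B).flip v).comp
        (ContinuousLinearMap.mul ℂ B (star v))).comp ιL)) := by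
    intro v hv
    constructor
    · show ψ (star v * ι 1 * v) = 1
      rw [map_one, mul_one, hv]
      exact hψ.1
    · intro c
      show 0 ≤ ψ (star v * ι (star c * c) * v)
      have h : star v * ι (star c * c) * v = star (ι c * v) * (ι c * v) := by
        rw [star_mul, ← map_star, map_mul, mul_assoc, mul_assoc, mul_assoc]
      rw [h]
      exact hψ.2 (ι c * v)
  have hwu : star w * w = 1 := by
    have h := hkey1 1
    simp only [map_one] at h
    have h2 : star w * (1:B) * w = star w * w := by rw [mul_one]
    rw [h2] at h
    rw [h]
    module
  have hwu' : star (star w) * star w = 1 := by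
    rw [star_star]
    have h := hkey2 1
    simp only [map_one] at h
    have h2 : w * (1:B) * star w = w * star w := by rw [mul_one]
    rw [h2] at h
    rw [h]
    module
  have hs₁ : IsState ψ₁ := hstate w hwu
  have hs₂ : IsState ψ₂ := by
    have h := hstate (star w) hwu'
    rwa [star_star] at h
  -- convex decomposition of φ
  have hconv : φ = (((1:ℝ)/2 : ℝ) : ℂ) • ψ₁ + ((1 - (1:ℝ)/2 : ℝ) : ℂ) • ψ₂ := by
    ext c
    simp only [ContinuousLinearMap.add_apply, ContinuousLinearMap.smul_apply, smul_eq_mul,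
      hψ₁c, hψ₂c]
    push_cast
    ring
  obtain ⟨h1, -⟩ := hφ.2 ψ₁ ψ₂ hs₁ hs₂ ((1:ℝ)/2) (by norm_num) (by norm_num) hconv
  have h2 : ψ₁ a = φ a := by rw [h1]
  rw [hψ₁c a] at h2
  have h3 : (2⁻¹ * Complex.I) * (ψ (ι (Φ a) * u) - ψ (ι a * u)) = 0 := by
    linear_combination h2
  have h4 : ψ (ι (Φ a) * u) - ψ (ι a * u) = 0 := by
    rcases mul_eq_zero.mp h3 with h | h
    · exfalso
      have : (2⁻¹ * Complex.I) ≠ 0 := by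
        simp [Complex.I_ne_zero]
      exact this h
    · exact h
  exact sub_eq_zero.mp h4

end
end

section
/- With the notation of the context (B encoding the crossed product A ⋊_Φ ℤ/2ℤ, φ a pure state of A with φ∘Φ = φ, and ψ a state of B extending φ): (i) ψ is uniquely determined by the value ψ(u), i.e. if ψ′ is another state of B whose restriction to A equals φ and ψ′(u) = ψ(u), then ψ′ = ψ; and (ii) ψ is a pure state of B if and only if ψ(u) = 1 or ψ(u) = −1. -/
open scoped ComplexOrder

noncomputable section

set_option linter.unusedSectionVars false
set_option maxHeartbeats 1000000

variable {A B : Type*}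
  [NormedRing A] [StarRing A] [CStarRing A]
  [NormedAlgebra ℂ A] [StarModule ℂ A] [CompleteSpace A]
  [NormedRing B] [StarRing B] [CStarRing B]
  [NormedAlgebra ℂ B] [StarModule ℂ B] [CompleteSpace B]

section Aux

variable {C : Type*} [NormedRing C] [StarRing C] [CStarRing C]
    [NormedAlgebra ℂ C] [StarModule ℂ C] [CompleteSpace C]

lemma pos_expand (ρ : C →L[ℂ] ℂ) (hρ : ∀ a : C, 0 ≤ ρ (star a * a)) (x y : C) (t : ℂ) :
    0 ≤ ρ (star x * x) + t * ρ (star x * y) + (starRingEnd ℂ) t * ρ (star y * x)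
      + ((starRingEnd ℂ) t * t) * ρ (star y * y) := by
  have h := hρ (x + t • y)
  have hexp : star (x + t • y) * (x + t • y)
      = star x * x + t • (star x * y) + (starRingEnd ℂ) t • (star y * x)
        + ((starRingEnd ℂ) t * t) • (star y * y) := by
    rw [star_add, star_smul]
    simp only [add_mul, mul_add, smul_mul_assoc, mul_smul_comm, smul_smul, starRingEnd_apply,
      smul_add]
    abel_nf
    rw [mul_comm t (star t)]
  rw [hexp] at h
  simpa [mul_comm] using h

lemma pos_conj (ρ : C →L[ℂ] ℂ) (hρ : ∀ a : C, 0 ≤ ρ (star a * a)) (x y : C) :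
    ρ (star y * x) = (starRingEnd ℂ) (ρ (star x * y)) := by
  have him : ∀ a : C, (ρ (star a * a)).im = 0 := fun a => ((Complex.le_def.mp (hρ a)).2).symm
  have e1 := (Complex.le_def.mp (pos_expand ρ hρ x y 1)).2
  have eI := (Complex.le_def.mp (pos_expand ρ hρ x y Complex.I)).2
  simp only [map_one, one_mul, Complex.add_im, Complex.mul_im, Complex.conj_re, Complex.conj_im,
    Complex.I_re, Complex.I_im, Complex.conj_I, Complex.zero_im, Complex.mul_re,
    Complex.neg_re, Complex.neg_im, him x, him y] at e1 eI
  apply Complex.ext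
  · rw [Complex.conj_re]; linarith
  · rw [Complex.conj_im]; linarith

lemma pos_star (ρ : C →L[ℂ] ℂ) (hρ : ∀ a : C, 0 ≤ ρ (star a * a)) (z : C) :
    ρ (star z) = (starRingEnd ℂ) (ρ z) := by
  have := pos_conj ρ hρ 1 z
  simpa using this

lemma pos_cs (ρ : C →L[ℂ] ℂ) (hρ : ∀ a : C, 0 ≤ ρ (star a * a)) (x y : C) :
    Complex.normSq (ρ (star x * y)) ≤ (ρ (star x * x)).re * (ρ (star y * y)).re := by
  have hre : ∀ a : C, 0 ≤ (ρ (star a * a)).re := fun a => (Complex.le_def.mp (hρ a)).1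
  have hineq : ∀ t : ℂ, 0 ≤ (ρ (star x * x)).re + 2 * (t * ρ (star x * y)).re
      + Complex.normSq t * (ρ (star y * y)).re := by
    intro t
    have h := (Complex.le_def.mp (pos_expand ρ hρ x y t)).1
    rw [pos_conj ρ hρ x y] at h
    have h2 : ((starRingEnd ℂ) t * (starRingEnd ℂ) (ρ (star x * y))).re
        = (t * ρ (star x * y)).re := by
      simp only [Complex.mul_re, Complex.conj_re, Complex.conj_im]; ring
    have h3 : (((starRingEnd ℂ) t * t) * ρ (star y * y)).re
        = Complex.normSq t * (ρ (star y * y)).re := by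
      have ht : (starRingEnd ℂ) t * t = (Complex.normSq t : ℂ) := by
        rw [mul_comm]; exact Complex.mul_conj t
      rw [ht, Complex.re_ofReal_mul]
    simp only [Complex.add_re, Complex.zero_re] at h
    rw [h2, h3] at h
    linarith
  have hk : ∀ k : ℝ, 0 ≤ (ρ (star x * x)).re - 2 * k * Complex.normSq (ρ (star x * y))
      + k ^ 2 * Complex.normSq (ρ (star x * y)) * (ρ (star y * y)).re := by
    intro k
    have h := hineq (-(k : ℂ) * (starRingEnd ℂ) (ρ (star x * y)))
    have e1 : ((-(k : ℂ) * (starRingEnd ℂ) (ρ (star x * y))) * ρ (star x * y)).re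
        = -k * Complex.normSq (ρ (star x * y)) := by
      rw [mul_assoc, mul_comm ((starRingEnd ℂ) (ρ (star x * y))) (ρ (star x * y)),
        Complex.mul_conj]
      rw [← Complex.ofReal_neg, Complex.re_ofReal_mul, Complex.ofReal_re]
    have e2 : Complex.normSq (-(k : ℂ) * (starRingEnd ℂ) (ρ (star x * y)))
        = k ^ 2 * Complex.normSq (ρ (star x * y)) := by
      rw [Complex.normSq_mul, Complex.normSq_neg, Complex.normSq_conj, Complex.normSq_ofReal]
      ring
    rw [e1, e2] at h
    linarith
  rcases eq_or_lt_of_le (hre y) with h0 | hpos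
  · have hns0 : Complex.normSq (ρ (star x * y)) = 0 := by
      by_contra hne
      have hnsq : 0 < Complex.normSq (ρ (star x * y)) :=
        lt_of_le_of_ne (Complex.normSq_nonneg _) (Ne.symm hne)
      have h := hk (((ρ (star x * x)).re + 1) / (2 * Complex.normSq (ρ (star x * y))))
      rw [← h0] at h
      have hx1 : 0 ≤ (ρ (star x * x)).re := hre x
      have : (((ρ (star x * x)).re + 1) / (2 * Complex.normSq (ρ (star x * y))))
          * (2 * Complex.normSq (ρ (star x * y))) = (ρ (star x * x)).re + 1 := by
        field_simp
      nlinarith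
    rw [hns0]
    exact mul_nonneg (hre x) (hre y)
  · have h := hk (1 / (ρ (star y * y)).re)
    have h2 : (1 / (ρ (star y * y)).re) ^ 2 * Complex.normSq (ρ (star x * y))
        * (ρ (star y * y)).re = (1 / (ρ (star y * y)).re) * Complex.normSq (ρ (star x * y)) := by
      field_simp
    rw [h2] at h
    have h3 : (1 / (ρ (star y * y)).re) * Complex.normSq (ρ (star x * y)) ≤ (ρ (star x * x)).re := by
      linarith
    have h4 := mul_le_mul_of_nonneg_right h3 (le_of_lt hpos)
    have h5 : (1 / (ρ (star y * y)).re) * Complex.normSq (ρ (star x * y)) * (ρ (star y * y)).re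
        = Complex.normSq (ρ (star x * y)) := by
      field_simp
    linarith [h5 ▸ h4]

lemma pos_zero (ρ : C →L[ℂ] ℂ) (hpos : ∀ a : C, 0 ≤ ρ (star a * a))
    (h1 : (ρ 1).re = 0) (b : C) : ρ b = 0 := by
  have hcs := pos_cs ρ hpos 1 b
  rw [star_one, one_mul, one_mul, h1, zero_mul] at hcs
  exact Complex.normSq_eq_zero.mp (le_antisymm hcs (Complex.normSq_nonneg _))

lemma pure_order (φ ρ : C →L[ℂ] ℂ) (hφ : IsPureState φ)
    (hpos : ∀ a : C, 0 ≤ ρ (star a * a)) (hle : ∀ a : C, ρ (star a * a) ≤ φ (star a * a)) :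
    ρ = ρ 1 • φ := by
  have hρ1 : (0 : ℂ) ≤ ρ 1 := by simpa using hpos 1
  have hρ1re : ρ 1 = ((ρ 1).re : ℂ) := Complex.eq_re_of_ofReal_le hρ1
  set s := (ρ 1).re with hs
  have hs0 : 0 ≤ s := by simpa using (Complex.le_def.mp hρ1).1
  have hs1 : s ≤ 1 := by
    have h := hle 1
    rw [star_one, one_mul, hφ.1.1] at h
    simpa using (Complex.le_def.mp h).1
  rcases eq_or_lt_of_le hs0 with h0 | h0
  · -- s = 0
    ext b
    rw [pos_zero ρ hpos h0.symm b, hρ1re, ContinuousLinearMap.smul_apply, ← h0]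
    simp
  rcases eq_or_lt_of_le hs1 with h1 | h1
  · -- s = 1
    have hσpos : ∀ a : C, 0 ≤ (φ - ρ) (star a * a) := by
      intro a
      rw [ContinuousLinearMap.sub_apply, ← sub_nonneg] at *
      simpa using hle a
    have hσ1 : ((φ - ρ) 1).re = 0 := by
      rw [ContinuousLinearMap.sub_apply, hφ.1.1, hρ1re]
      simp [h1]
    have : ∀ b, φ b = ρ b := by
      intro b
      have := pos_zero (φ - ρ) hσpos hσ1 b
      rw [ContinuousLinearMap.sub_apply, sub_eq_zero] at this
      exact this
    ext b
    rw [hρ1re, ContinuousLinearMap.smul_apply, h1, ← this b]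
    simp
  · -- 0 < s < 1
    set ψ₁ : C →L[ℂ] ℂ := ((s⁻¹ : ℝ) : ℂ) • ρ with hψ₁
    set ψ₂ : C →L[ℂ] ℂ := (((1 - s)⁻¹ : ℝ) : ℂ) • (φ - ρ) with hψ₂
    have hsne : (s : ℂ) ≠ 0 := by
      simpa using ne_of_gt h0
    have h1sne : ((1 - s : ℝ) : ℂ) ≠ 0 := by
      simp only [ne_eq, Complex.ofReal_eq_zero]
      linarith
    have st1 : IsState ψ₁ := by
      constructor
      · rw [hψ₁, ContinuousLinearMap.smul_apply, hρ1re, smul_eq_mul, ← Complex.ofReal_mul,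
          inv_mul_cancel₀ (ne_of_gt h0), Complex.ofReal_one]
      · intro a
        rw [hψ₁, ContinuousLinearMap.smul_apply, smul_eq_mul]
        exact mul_nonneg (Complex.zero_le_real.mpr (inv_nonneg.mpr hs0)) (hpos a)
    have st2 : IsState ψ₂ := by
      constructor
      · rw [hψ₂, ContinuousLinearMap.smul_apply, ContinuousLinearMap.sub_apply, hφ.1.1, hρ1re,
          smul_eq_mul, ← Complex.ofReal_one, ← Complex.ofReal_sub, ← Complex.ofReal_mul,
          inv_mul_cancel₀ (by linarith : (1 : ℝ) - s ≠ 0), Complex.ofReal_one]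
      · intro a
        rw [hψ₂, ContinuousLinearMap.smul_apply, smul_eq_mul, ContinuousLinearMap.sub_apply]
        refine mul_nonneg (Complex.zero_le_real.mpr (inv_nonneg.mpr (by linarith))) ?_
        rw [← sub_nonneg] at *
        simpa using hle a
    have heq : φ = (s : ℂ) • ψ₁ + ((1 - s : ℝ) : ℂ) • ψ₂ := by
      ext b
      simp only [ContinuousLinearMap.add_apply, ContinuousLinearMap.smul_apply, hψ₁, hψ₂,
        ContinuousLinearMap.sub_apply, smul_eq_mul]
      have c1 : (s : ℂ) * (((s⁻¹ : ℝ) : ℂ) * ρ b) = ρ b := by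
        rw [← mul_assoc, ← Complex.ofReal_mul, mul_inv_cancel₀ (ne_of_gt h0),
          Complex.ofReal_one, one_mul]
      have c2 : ((1 - s : ℝ) : ℂ) * ((((1 - s)⁻¹ : ℝ) : ℂ) * (φ b - ρ b)) = φ b - ρ b := by
        rw [← mul_assoc, ← Complex.ofReal_mul, mul_inv_cancel₀ (by linarith : (1:ℝ) - s ≠ 0),
          Complex.ofReal_one, one_mul]
      rw [c1, c2]
      ring
    obtain ⟨e1, _⟩ := hφ.2 ψ₁ ψ₂ st1 st2 s h0 h1 heq
    ext b
    have := ContinuousLinearMap.ext_iff.mp e1 b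
    rw [hψ₁, ContinuousLinearMap.smul_apply, smul_eq_mul] at this
    rw [ContinuousLinearMap.smul_apply, smul_eq_mul, hρ1re, ← this,
      ← mul_assoc, ← Complex.ofReal_mul, mul_inv_cancel₀ (ne_of_gt h0)]
    simp

end Aux

/-- In the crossed product `B = A ⋊_Φ ℤ/2ℤ` (encoded by `ι, u, E`), a state `ψ` of `B`
extending the `Φ`-invariant pure state `φ` of `A` is uniquely determined by `ψ(u)`,
and it is pure iff `ψ(u) = 1` or `ψ(u) = -1`. -/
theorem statement9
    (ι : A →⋆ₐ[ℂ] B) (hι : Isometry (⇑ι))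
    (Φ : A ≃⋆ₐ[ℂ] A) (hΦ2 : ∀ a : A, Φ (Φ a) = a)
    (houter : ∀ v ∈ unitary A, ∃ a : A, Φ a ≠ v * a * star v)
    (u : B) (hu_mem : u ∈ unitary B) (hu_sa : star u = u)
    (hcov : ∀ a : A, u * ι a * u = ι (Φ a))
    (hspan : ∀ b : B, ∃ a c : A, b = ι a + ι c * u)
    (E : B →ₗ[ℂ] A) (hE_unital : E 1 = 1)
    (hE_pos : ∀ b : B, ∃ d : A, E (star b * b) = star d * d)
    (hE_exp : ∀ a c : A, E (ι a + ι c * u) = a)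
    (φ : A →L[ℂ] ℂ) (hφ : IsPureState φ) (hφΦ : ∀ a : A, φ (Φ a) = φ a)
    (ψ : B →L[ℂ] ℂ) (hψ : IsState ψ) (hres : ∀ a : A, ψ (ι a) = φ a) :
    (∀ ψ' : B →L[ℂ] ℂ, IsState ψ' → (∀ a : A, ψ' (ι a) = φ a) →
      ψ' u = ψ u → ψ' = ψ) ∧
    (IsPureState ψ ↔ (ψ u = 1 ∨ ψ u = -1)) := by
  have hu2 : u * u = 1 := by
    have h := (Unitary.mem_iff.mp hu_mem).1
    rwa [hu_sa] at h
  have hbu : ∀ c : A, u * ι c = ι (Φ c) * u := by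
    intro c
    rw [← hcov c, mul_assoc, hu2, mul_one]
  have huu : ∀ x : B, u * (u * x) = x := fun x => by rw [← mul_assoc, hu2, one_mul]
  -- ι as a continuous linear map
  set ιL : A →L[ℂ] B := { toLinearMap := ι.toAlgHom.toLinearMap, cont := hι.continuous }
    with hιL
  have hιL_apply : ∀ a : A, ιL a = ι a := fun _ => rfl
  -- multiplication maps
  set RuB : B →L[ℂ] B := (ContinuousLinearMap.mul ℂ B).flip u with hRuB
  have hRuB_apply : ∀ b : B, RuB b = b * u := fun _ => rfl
  set Lu : A →L[ℂ] B := ((ContinuousLinearMap.mul ℂ B) u).comp ιL with hLu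
  have hLu_apply : ∀ a : A, Lu a = u * ι a := fun _ => rfl
  set Ru : A →L[ℂ] B := RuB.comp ιL with hRu
  have hRu_apply : ∀ a : A, Ru a = ι a * u := fun _ => rfl
  -- KEY LEMMA: for any state χ of B extending φ, χ (ι c * u) = χ u * φ c
  have key : ∀ χ : B →L[ℂ] ℂ, IsState χ → (∀ a : A, χ (ι a) = φ a) →
      ∀ c : A, χ (ι c * u) = χ u * φ c ∧ χ (u * ι c) = χ u * φ c := by
    intro χ hχ hχres
    have hχpos := hχ.2
    -- conjugate identity
    have hconj : ∀ c : A, χ (ι (star c * c) * u) = (starRingEnd ℂ) (χ (u * ι (star c * c))) := by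
      intro c
      have h := pos_star χ hχpos (u * ι (star c * c))
      have hs : star (u * ι (star c * c)) = ι (star c * c) * u := by
        rw [star_mul, hu_sa, ← map_star, star_mul, star_star]
      rw [hs] at h
      exact h
    -- Cauchy-Schwarz bound
    have hbound : ∀ c : A, Complex.normSq (χ (u * ι (star c * c)))
        ≤ (φ (star c * c)).re * (φ (star c * c)).re := by
      intro c
      have hform : u * ι (star c * c) = star (ι (Φ c)) * (u * ι c) := by
        rw [← map_star, ← map_star Φ, ← mul_assoc, ← hbu (star c), mul_assoc, ← map_mul]
      have hcs := pos_cs χ hχpos (ι (Φ c)) (u * ι c)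
      have e1 : star (ι (Φ c)) * ι (Φ c) = ι (Φ (star c * c)) := by
        rw [← map_star, ← map_mul, ← map_star Φ, ← map_mul]
      have e2 : star (u * ι c) * (u * ι c) = ι (star c * c) := by
        rw [star_mul, hu_sa, ← map_star, mul_assoc, huu, ← map_mul]
      rw [e1, e2, hχres, hχres, hφΦ, ← hform] at hcs
      exact hcs
    have hφval : ∀ c : A, φ (star c * c) = ((φ (star c * c)).re : ℂ) :=
      fun c => Complex.eq_re_of_ofReal_le (hφ.1.2 c)
    have hφre : ∀ c : A, 0 ≤ (φ (star c * c)).re :=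
      fun c => by simpa using (Complex.le_def.mp (hφ.1.2 c)).1
    have hrebound : ∀ c : A, |(χ (u * ι (star c * c))).re| ≤ (φ (star c * c)).re
        ∧ |(χ (u * ι (star c * c))).im| ≤ (φ (star c * c)).re := by
      intro c
      have h := hbound c
      rw [Complex.normSq_apply] at h
      have hr := hφre c
      constructor <;> rw [abs_le] <;> constructor <;>
        nlinarith [sq_nonneg ((χ (u * ι (star c * c))).re), sq_nonneg ((χ (u * ι (star c * c))).im),
          sq_nonneg ((χ (u * ι (star c * c))).re + (φ (star c * c)).re),
          sq_nonneg ((χ (u * ι (star c * c))).re - (φ (star c * c)).re),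
          sq_nonneg ((χ (u * ι (star c * c))).im + (φ (star c * c)).re),
          sq_nonneg ((χ (u * ι (star c * c))).im - (φ (star c * c)).re)]
    set σP : A →L[ℂ] ℂ :=
      (1/2 : ℂ) • χ.comp ιL + (1/4 : ℂ) • χ.comp Lu + (1/4 : ℂ) • χ.comp Ru with hσP
    set σQ : A →L[ℂ] ℂ :=
      (1/2 : ℂ) • χ.comp ιL + (Complex.I/4 : ℂ) • χ.comp Lu
        + (-(Complex.I/4) : ℂ) • χ.comp Ru with hσQ
    have hσP_apply : ∀ a : A, σP a
        = 1/2 * χ (ι a) + 1/4 * χ (u * ι a) + 1/4 * χ (ι a * u) := by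
      intro a
      simp only [hσP, ContinuousLinearMap.add_apply, ContinuousLinearMap.smul_apply,
        ContinuousLinearMap.comp_apply, hιL_apply, hLu_apply, hRu_apply, smul_eq_mul]
    have hσQ_apply : ∀ a : A, σQ a
        = 1/2 * χ (ι a) + Complex.I/4 * χ (u * ι a) + (-(Complex.I/4)) * χ (ι a * u) := by
      intro a
      simp only [hσQ, ContinuousLinearMap.add_apply, ContinuousLinearMap.smul_apply,
        ContinuousLinearMap.comp_apply, hιL_apply, hLu_apply, hRu_apply, smul_eq_mul]
    -- real-form values
    have hσP_val : ∀ c : A, σP (star c * c)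
        = (((φ (star c * c)).re / 2 + (χ (u * ι (star c * c))).re / 2 : ℝ) : ℂ) := by
      intro c
      rw [hσP_apply, hχres, hconj c, hφval c, add_assoc, ← mul_add, Complex.add_conj]
      push_cast
      simp only [Complex.ofReal_re]
      ring
    have hσQ_val : ∀ c : A, σQ (star c * c)
        = (((φ (star c * c)).re / 2 - (χ (u * ι (star c * c))).im / 2 : ℝ) : ℂ) := by
      intro c
      rw [hσQ_apply, hχres, hconj c, hφval c, add_assoc, neg_mul, ← sub_eq_add_neg, ← mul_sub,
        Complex.sub_conj]
      push_cast
      simp only [Complex.ofReal_re]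
      linear_combination (((χ (u * ι (star c * c))).im : ℂ))/2 * Complex.I_mul_I
    -- positivity and domination
    have hσP_pos : ∀ c : A, 0 ≤ σP (star c * c) := by
      intro c
      rw [hσP_val c]
      have := (hrebound c).1
      rw [abs_le] at this
      exact Complex.zero_le_real.mpr (by linarith)
    have hσP_le : ∀ c : A, σP (star c * c) ≤ φ (star c * c) := by
      intro c
      rw [hσP_val c]
      conv_rhs => rw [hφval c]
      have := (hrebound c).1
      rw [abs_le] at this
      exact Complex.real_le_real.mpr (by linarith)
    have hσQ_pos : ∀ c : A, 0 ≤ σQ (star c * c) := by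
      intro c
      rw [hσQ_val c]
      have := (hrebound c).2
      rw [abs_le] at this
      exact Complex.zero_le_real.mpr (by linarith)
    have hσQ_le : ∀ c : A, σQ (star c * c) ≤ φ (star c * c) := by
      intro c
      rw [hσQ_val c]
      conv_rhs => rw [hφval c]
      have := (hrebound c).2
      rw [abs_le] at this
      exact Complex.real_le_real.mpr (by linarith)
    have hP := pure_order φ σP hφ hσP_pos hσP_le
    have hQ := pure_order φ σQ hφ hσQ_pos hσQ_le
    -- values at 1
    have hσP1 : σP 1 = 1/2 + 1/2 * χ u := by
      rw [hσP_apply, map_one, hχ.1, mul_one, one_mul]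
      simp only [mul_one]
      ring
    have hσQ1 : σQ 1 = 1/2 := by
      rw [hσQ_apply, map_one, hχ.1, mul_one, one_mul]
      simp only [mul_one]
      ring
    intro c
    have hPc := ContinuousLinearMap.ext_iff.mp hP c
    have hQc := ContinuousLinearMap.ext_iff.mp hQ c
    rw [hσP_apply, ContinuousLinearMap.smul_apply, hσP1, smul_eq_mul, hχres] at hPc
    rw [hσQ_apply, ContinuousLinearMap.smul_apply, hσQ1, smul_eq_mul, hχres] at hQc
    have hEQ : χ (u * ι c) = χ (ι c * u) := by
      linear_combination (-4*Complex.I) * hQc + (χ (u * ι c) - χ (ι c * u)) * Complex.I_mul_I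
    constructor
    · linear_combination 2 * hPc - 1/2 * hEQ
    · linear_combination 2 * hPc + 1/2 * hEQ
  -- values of states at u are real and in [-1, 1]
  have huval : ∀ χ : B →L[ℂ] ℂ, IsState χ →
      (χ u).im = 0 ∧ -1 ≤ (χ u).re ∧ (χ u).re ≤ 1 := by
    intro χ hχ
    have hx1 : star (1 + u) * (1 + u) = 1 + u + u + u * u := by
      rw [star_add, star_one, hu_sa]; noncomm_ring
    have hx2 : star (1 - u) * (1 - u) = 1 - u - u + u * u := by
      rw [star_sub, star_one, hu_sa]; noncomm_ring
    have h1 := hχ.2 (1 + u)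
    have h2 := hχ.2 (1 - u)
    rw [hx1, hu2] at h1
    rw [hx2, hu2] at h2
    have e1 : χ (1 + u + u + 1) = 2 + 2 * χ u := by
      rw [map_add, map_add, map_add, hχ.1]; ring
    have e2 : χ (1 - u - u + 1) = 2 - 2 * χ u := by
      rw [map_add, map_sub, map_sub, hχ.1]; ring
    rw [e1] at h1
    rw [e2] at h2
    rw [Complex.le_def] at h1 h2
    obtain ⟨r1, i1⟩ := h1
    obtain ⟨r2, i2⟩ := h2
    simp only [Complex.add_re, Complex.add_im, Complex.sub_re, Complex.sub_im, Complex.mul_re,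
      Complex.mul_im, Complex.re_ofNat, Complex.im_ofNat, Complex.zero_re, Complex.zero_im]
      at r1 i1 r2 i2
    refine ⟨by linarith, by linarith, by linarith⟩
  -- uniqueness
  have huniq : ∀ ψ' : B →L[ℂ] ℂ, IsState ψ' → (∀ a : A, ψ' (ι a) = φ a) →
      ψ' u = ψ u → ψ' = ψ := by
    intro ψ' hψ' hres' hval
    ext b
    obtain ⟨a, c, rfl⟩ := hspan b
    rw [map_add, map_add, hres' a, hres a, (key ψ' hψ' hres' c).1, (key ψ hψ hres c).1, hval]
  refine ⟨huniq, ?_, ?_⟩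
  · -- pure implies ψ u = ± 1
    intro hpure
    by_contra hne
    push_neg at hne
    obtain ⟨him, hge, hle'⟩ := huval ψ hψ
    set l := (ψ u).re with hl
    have hψu : ψ u = (l : ℂ) := by
      apply Complex.ext
      · simp [hl]
      · simp [him]
    have hlt : l < 1 := by
      rcases lt_or_eq_of_le hle' with h | h
      · exact h
      · exact absurd (by rw [hψu, h, Complex.ofReal_one]) hne.1
    have hgt : -1 < l := by
      rcases lt_or_eq_of_le hge with h | h
      · exact h
      · exact absurd (by rw [hψu, ← h]; norm_num) hne.2
    have h1l : (1 : ℝ) + l ≠ 0 := by linarith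
    have h2l : (1 : ℝ) - l ≠ 0 := by linarith
    set ψp : B →L[ℂ] ℂ := (((1 + l)⁻¹ : ℝ) : ℂ) • (ψ + ψ.comp RuB) with hψp
    set ψm : B →L[ℂ] ℂ := (((1 - l)⁻¹ : ℝ) : ℂ) • (ψ - ψ.comp RuB) with hψm
    have hψp_apply : ∀ b : B, ψp b = (((1 + l)⁻¹ : ℝ) : ℂ) * (ψ b + ψ (b * u)) := by
      intro b
      simp only [hψp, ContinuousLinearMap.smul_apply, ContinuousLinearMap.add_apply,
        ContinuousLinearMap.comp_apply, hRuB_apply, smul_eq_mul]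
    have hψm_apply : ∀ b : B, ψm b = (((1 - l)⁻¹ : ℝ) : ℂ) * (ψ b - ψ (b * u)) := by
      intro b
      simp only [hψm, ContinuousLinearMap.smul_apply, ContinuousLinearMap.sub_apply,
        ContinuousLinearMap.comp_apply, hRuB_apply, smul_eq_mul]
    -- product expansion
    have hxx : ∀ a c : A, star (ι a + ι c * u) * (ι a + ι c * u)
        = ι (star a * a + Φ (star c * c)) + ι (star a * c + Φ (star c * a)) * u := by
      intro a c
      rw [star_add, star_mul, hu_sa, ← map_star, ← map_star]
      rw [map_add, map_add, ← hcov (star c * c), ← hcov (star c * a)]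
      simp only [map_mul]
      simp only [add_mul, mul_add, mul_assoc, hu2, mul_one]
      abel
    have hstx : ∀ a c : A, ψ (star (ι a + ι c * u) * (ι a + ι c * u))
          = φ (star a * a) + φ (star c * c) + ψ u * (φ (star a * c) + φ (star c * a))
        ∧ ψ (star (ι a + ι c * u) * (ι a + ι c * u) * u)
          = ψ u * (φ (star a * a) + φ (star c * c)) + (φ (star a * c) + φ (star c * a)) := by
      intro a c
      rw [hxx a c]
      constructor
      · rw [map_add, hres, (key ψ hψ hres _).1]
        simp only [map_add, hφΦ]
        try ring
      · rw [add_mul, mul_assoc, hu2, mul_one, map_add, (key ψ hψ hres _).1, hres]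
        simp only [map_add, hφΦ]
        try ring
    have hsum : ∀ a c : A, φ (star a * a) + φ (star c * c) + φ (star a * c) + φ (star c * a)
        = φ (star (a + c) * (a + c)) := by
      intro a c
      rw [star_add, add_mul, mul_add, mul_add, map_add, map_add, map_add]
      ring
    have hdiff : ∀ a c : A, φ (star a * a) + φ (star c * c) - φ (star a * c) - φ (star c * a)
        = φ (star (a - c) * (a - c)) := by
      intro a c
      rw [star_sub, sub_mul, mul_sub, mul_sub, map_sub, map_sub, map_sub]
      ring
    have hinvp : (((1 + l)⁻¹ : ℝ) : ℂ) * ((1 : ℂ) + (l : ℂ)) = 1 := by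
      rw [show ((1 : ℂ) + (l : ℂ)) = (((1 + l : ℝ)) : ℂ) by push_cast; ring,
        ← Complex.ofReal_mul, inv_mul_cancel₀ h1l, Complex.ofReal_one]
    have hinvm : (((1 - l)⁻¹ : ℝ) : ℂ) * ((1 : ℂ) - (l : ℂ)) = 1 := by
      rw [show ((1 : ℂ) - (l : ℂ)) = (((1 - l : ℝ)) : ℂ) by push_cast; ring,
        ← Complex.ofReal_mul, inv_mul_cancel₀ h2l, Complex.ofReal_one]
    have hψp_pos : ∀ x : B, 0 ≤ ψp (star x * x) := by
      intro x
      obtain ⟨a, c, rfl⟩ := hspan x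
      rw [hψp_apply, (hstx a c).1, (hstx a c).2, hψu]
      have hpos := hφ.1.2 (a + c)
      rw [← hsum a c] at hpos
      have hfact : (((1 + l)⁻¹ : ℝ) : ℂ) *
          ((φ (star a * a) + φ (star c * c) + (l : ℂ) * (φ (star a * c) + φ (star c * a)))
            + ((l : ℂ) * (φ (star a * a) + φ (star c * c)) + (φ (star a * c) + φ (star c * a))))
          = φ (star a * a) + φ (star c * c) + φ (star a * c) + φ (star c * a) := by
        linear_combination (φ (star a * a) + φ (star c * c) + φ (star a * c) + φ (star c * a))
          * hinvp
      rw [hfact]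
      exact hpos
    have hψm_pos : ∀ x : B, 0 ≤ ψm (star x * x) := by
      intro x
      obtain ⟨a, c, rfl⟩ := hspan x
      rw [hψm_apply, (hstx a c).1, (hstx a c).2, hψu]
      have hpos := hφ.1.2 (a - c)
      rw [← hdiff a c] at hpos
      have hfact : (((1 - l)⁻¹ : ℝ) : ℂ) *
          ((φ (star a * a) + φ (star c * c) + (l : ℂ) * (φ (star a * c) + φ (star c * a)))
            - ((l : ℂ) * (φ (star a * a) + φ (star c * c)) + (φ (star a * c) + φ (star c * a))))
          = φ (star a * a) + φ (star c * c) - φ (star a * c) - φ (star c * a) := by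
        linear_combination (φ (star a * a) + φ (star c * c) - φ (star a * c) - φ (star c * a))
          * hinvm
      rw [hfact]
      exact hpos
    have stp : IsState ψp := by
      constructor
      · rw [hψp_apply, one_mul, hψ.1, hψu]
        exact hinvp
      · exact hψp_pos
    have stm : IsState ψm := by
      constructor
      · rw [hψm_apply, one_mul, hψ.1, hψu]
        exact hinvm
      · exact hψm_pos
    set t : ℝ := (1 + l) / 2 with ht
    have ht0 : 0 < t := by rw [ht]; linarith
    have ht1 : t < 1 := by rw [ht]; linarith
    have c1 : ((t : ℝ) : ℂ) * (((1 + l)⁻¹ : ℝ) : ℂ) = 1/2 := by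
      rw [← Complex.ofReal_mul, show t * (1 + l)⁻¹ = (1/2 : ℝ) by
        rw [ht]; field_simp]
      norm_num
    have c2 : (((1 - t : ℝ)) : ℂ) * (((1 - l)⁻¹ : ℝ) : ℂ) = 1/2 := by
      rw [← Complex.ofReal_mul, show (1 - t) * (1 - l)⁻¹ = (1/2 : ℝ) by
        rw [ht]; field_simp; ring]
      norm_num
    have heq : ψ = (t : ℂ) • ψp + ((1 - t : ℝ) : ℂ) • ψm := by
      ext b
      simp only [ContinuousLinearMap.add_apply, ContinuousLinearMap.smul_apply, smul_eq_mul,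
        hψp_apply, hψm_apply]
      linear_combination (-(ψ b + ψ (b * u))) * c1 - (ψ b - ψ (b * u)) * c2
    obtain ⟨ep, _⟩ := hpure.2 ψp ψm stp stm t ht0 ht1 heq
    have hval1 : ψp u = 1 := by
      rw [hψp_apply, hu2, hψ.1, hψu, show ((l : ℂ) + 1) = ((1 : ℂ) + (l : ℂ)) by ring, hinvp]
    exact hne.1 (by rw [← ep, hval1])
  · -- ψ u = ± 1 implies pure
    intro hval
    refine ⟨hψ, ?_⟩
    intro ψ₁ ψ₂ h₁ h₂ t ht0 ht1 heq
    have hstr : ∀ (χ : B →L[ℂ] ℂ), IsState χ → IsState (χ.comp ιL) := by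
      intro χ hχ
      constructor
      · rw [ContinuousLinearMap.comp_apply, hιL_apply, map_one, hχ.1]
      · intro a
        have hh : (χ.comp ιL) (star a * a) = χ (star (ι a) * ι a) := by
          rw [ContinuousLinearMap.comp_apply, hιL_apply, map_mul, map_star]
        rw [hh]
        exact hχ.2 (ι a)
    have hφeq : φ = (t : ℂ) • ψ₁.comp ιL + ((1 - t : ℝ) : ℂ) • ψ₂.comp ιL := by
      ext a
      have hh := ContinuousLinearMap.ext_iff.mp heq (ι a)
      rw [← hres a, hh]
      simp only [ContinuousLinearMap.add_apply, ContinuousLinearMap.smul_apply,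
        ContinuousLinearMap.comp_apply, hιL_apply]
    obtain ⟨e1, e2⟩ := hφ.2 (ψ₁.comp ιL) (ψ₂.comp ιL) (hstr ψ₁ h₁) (hstr ψ₂ h₂) t ht0 ht1 hφeq
    have hres₁ : ∀ a : A, ψ₁ (ι a) = φ a := by
      intro a
      have hh := ContinuousLinearMap.ext_iff.mp e1 a
      rwa [ContinuousLinearMap.comp_apply, hιL_apply] at hh
    have hres₂ : ∀ a : A, ψ₂ (ι a) = φ a := by
      intro a
      have hh := ContinuousLinearMap.ext_iff.mp e2 a
      rwa [ContinuousLinearMap.comp_apply, hιL_apply] at hh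
    obtain ⟨i1, g1, l1⟩ := huval ψ₁ h₁
    obtain ⟨i2, g2, l2⟩ := huval ψ₂ h₂
    have hre : (ψ u).re = t * (ψ₁ u).re + (1 - t) * (ψ₂ u).re := by
      have hh := ContinuousLinearMap.ext_iff.mp heq u
      rw [hh]
      simp only [ContinuousLinearMap.add_apply, ContinuousLinearMap.smul_apply, smul_eq_mul,
        Complex.add_re, Complex.re_ofReal_mul]
    have hval12 : ψ₁ u = ψ u ∧ ψ₂ u = ψ u := by
      rcases hval with hv | hv
      · have hr : (ψ u).re = 1 := by rw [hv]; simp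
        have e₁ : (ψ₁ u).re = 1 := by
          rcases lt_or_eq_of_le l1 with hx | hx
          · exfalso
            have p1 := mul_lt_mul_of_pos_left hx ht0
            have p2 := mul_le_mul_of_nonneg_left l2 (by linarith : (0:ℝ) ≤ 1 - t)
            rw [hr] at hre
            linarith
          · exact hx
        have e₂ : (ψ₂ u).re = 1 := by
          rcases lt_or_eq_of_le l2 with hx | hx
          · exfalso
            have p1 := mul_lt_mul_of_pos_left hx (by linarith : (0:ℝ) < 1 - t)
            have p2 := mul_le_mul_of_nonneg_left l1 (le_of_lt ht0)
            rw [hr] at hre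
            linarith
          · exact hx
        constructor <;> rw [hv] <;> apply Complex.ext <;>
          simp [e₁, e₂, i1, i2]
      · have hr : (ψ u).re = -1 := by rw [hv]; simp
        have e₁ : (ψ₁ u).re = -1 := by
          rcases lt_or_eq_of_le g1 with hx | hx
          · exfalso
            have p1 := mul_lt_mul_of_pos_left hx ht0
            have p2 := mul_le_mul_of_nonneg_left g2 (by linarith : (0:ℝ) ≤ 1 - t)
            rw [hr] at hre
            linarith
          · exact hx.symm
        have e₂ : (ψ₂ u).re = -1 := by
          rcases lt_or_eq_of_le g2 with hx | hx
          · exfalso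
            have p1 := mul_lt_mul_of_pos_left hx (by linarith : (0:ℝ) < 1 - t)
            have p2 := mul_le_mul_of_nonneg_left g1 (le_of_lt ht0)
            rw [hr] at hre
            linarith
          · exact hx.symm
        constructor <;> rw [hv] <;> apply Complex.ext <;>
          simp [e₁, e₂, i1, i2]
    exact ⟨huniq ψ₁ h₁ hres₁ hval12.1, huniq ψ₂ h₂ hres₂ hval12.2⟩

end
end
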